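/- For real numbers y, ŷ ∈ (0,1), if |y - ŷ| < 10^{-(m+1)} and the (m+1)-th decimal digit of y is neither 0 nor 9 (i.e., ⌊y·10^{m+1}⌋ mod 10 ∉ {0, 9}), then the first m decimal digits of y and ŷ coincide. -/
import Mathlib


theorem stmt_2 (y yhat : ℝ) (hy : y ∈ Set.Ioo (0 : ℝ) 1) (hyhat : yhat ∈ Set.Ioo (0 : ℝ) 1)
    (m : ℕ) (herr : |y - yhat| < (10 : ℝ) ^ (-((m : ℤ) + 1)))
    (hdig : ⌊y * 10 ^ (m + 1)⌋ % 10 ≠ 0 ∧ ⌊y * 10 ^ (m + 1)⌋ % 10 ≠ 9) :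
    ∀ k, 1 ≤ k → k ≤ m → ⌊y * 10 ^ k⌋ % 10 = ⌊yhat * 10 ^ k⌋ % 10 := by
  obtain ⟨hd0, hd9⟩ := hdig
  intro k hk1 hkm
  set N : ℤ := ⌊y * 10 ^ (m + 1)⌋ with hN
  set d : ℕ := m + 1 - k with hd
  have hdk : k + d = m + 1 := by omega
  have hdpos : 1 ≤ d := by omega
  have hdvd : (10:ℤ) ∣ 10 ^ d := dvd_pow_self 10 (by omega)
  set Q : ℤ := N / 10 ^ d with hQ
  set R : ℤ := N % 10 ^ d with hRdef
  have hpdpos : (0:ℤ) < 10 ^ d := by positivity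
  have hR0 : 0 ≤ R := Int.emod_nonneg N (by positivity)
  have hRlt : R < 10 ^ d := Int.emod_lt_of_pos N hpdpos
  have hRmod : R % 10 = N % 10 := Int.emod_emod_of_dvd N hdvd
  have hR1 : 1 ≤ R := by omega
  have hR2 : R ≤ 10 ^ d - 2 := by omega
  have hNQR : 10 ^ d * Q + R = N := Int.mul_ediv_add_emod N (10 ^ d)
  -- cast facts to ℝ
  have hcast : (10:ℝ) ^ d * (Q:ℝ) + (R:ℝ) = (N:ℝ) := by exact_mod_cast hNQR
  have hR1' : (1:ℝ) ≤ (R:ℝ) := by exact_mod_cast hR1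
  have hR2' : (R:ℝ) ≤ (10:ℝ) ^ d - 2 := by
    have : ((R:ℝ)) ≤ ((10:ℤ)^d - 2 : ℤ) := by exact_mod_cast hR2
    push_cast at this; linarith
  have hpow : (10:ℝ) ^ (m+1) = 10 ^ k * 10 ^ d := by rw [← pow_add, hdk]
  have hfl : (N:ℝ) ≤ y * 10 ^ (m+1) := Int.floor_le _
  have hfu : y * 10 ^ (m+1) < N + 1 := Int.lt_floor_add_one _
  have hdR : (0:ℝ) < (10:ℝ) ^ d := by positivity
  have hxl : ((N:ℝ)) ≤ (y * 10 ^ k) * 10 ^ d := by rw [mul_assoc, ← hpow]; exact hfl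
  have hxu : (y * 10 ^ k) * 10 ^ d < N + 1 := by rw [mul_assoc, ← hpow]; exact hfu
  -- error bound scaled up
  have hzp : (10:ℝ) ^ (-((m:ℤ)+1)) = ((10:ℝ) ^ (m+1))⁻¹ := by
    rw [← zpow_natCast (10:ℝ) (m+1), ← zpow_neg]
    push_cast
    ring_nf
  have hmp : (0:ℝ) < (10:ℝ) ^ (m+1) := by positivity
  have herr2 : |y - yhat| * 10 ^ (m+1) < 1 := by
    rw [hzp] at herr
    rw [← lt_div_iff₀ hmp]
    simpa [one_div] using herr
  have herr3 : |(y - yhat) * 10 ^ (m+1)| < 1 := by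
    rwa [abs_mul, abs_of_pos hmp]
  have habs := abs_lt.mp herr3
  have hyl : (N:ℝ) - 1 < yhat * 10 ^ (m+1) := by nlinarith [habs.2]
  have hyu : yhat * 10 ^ (m+1) < N + 2 := by nlinarith [habs.1]
  have hyl' : (N:ℝ) - 1 < (yhat * 10 ^ k) * 10 ^ d := by rw [mul_assoc, ← hpow]; exact hyl
  have hyu' : (yhat * 10 ^ k) * 10 ^ d < N + 2 := by rw [mul_assoc, ← hpow]; exact hyu
  have hfy : ⌊y * 10 ^ k⌋ = Q := by
    rw [Int.floor_eq_iff]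
    constructor
    · nlinarith
    · push_cast
      nlinarith
  have hfyhat : ⌊yhat * 10 ^ k⌋ = Q := by
    rw [Int.floor_eq_iff]
    constructor
    · nlinarith
    · push_cast
      nlinarith
  rw [hfy, hfyhat]
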